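/- Let p be a prime and n a positive integer with n in the image of g(m) = gcd(m, F_m). If ℓ(p) divides ℓ(n) then p divides n, where ℓ(k) = lcm(k, z(k)). -/
import Mathlib


/-- Rank of appearance of `n` in the Fibonacci sequence. -/
noncomputable def zf (n : ℕ) : ℕ := sInf {k | 0 < k ∧ n ∣ Nat.fib k}

noncomputable def ellf (n : ℕ) : ℕ := Nat.lcm n (zf n)

def gf (n : ℕ) : ℕ := Nat.gcd n (Nat.fib n)

def Afib : Set ℕ := {m | ∃ n : ℕ, 0 < n ∧ gf n = m}

/-- The Fibonacci shift as a permutation of `ZMod n × ZMod n`. -/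
def fibShift (n : ℕ) : Equiv.Perm (ZMod n × ZMod n) where
  toFun x := (x.2, x.1 + x.2)
  invFun x := (x.2 - x.1, x.1)
  left_inv x := by simp
  right_inv x := by simp

lemma fibShift_pow (n k : ℕ) :
    (fibShift n ^ k) (0, 1) = ((Nat.fib k : ZMod n), (Nat.fib (k + 1) : ZMod n)) := by
  induction k with
  | zero => simp [Nat.fib]
  | succ k ih =>
    rw [pow_succ', Equiv.Perm.mul_apply, ih]
    simp [fibShift, Nat.fib_add_two]

lemma exists_fib_dvd (n : ℕ) (hn : 0 < n) : ∃ k, 0 < k ∧ n ∣ Nat.fib k := by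
  haveI : NeZero n := ⟨hn.ne'⟩
  refine ⟨orderOf (fibShift n), orderOf_pos _, ?_⟩
  have h1 : (fibShift n ^ orderOf (fibShift n)) (0, 1) = (0, 1) := by
    rw [pow_orderOf_eq_one]; rfl
  rw [fibShift_pow] at h1
  have := congrArg Prod.fst h1
  simpa using (ZMod.natCast_eq_zero_iff _ n).mp this

lemma zf_mem (n : ℕ) (hn : 0 < n) : 0 < zf n ∧ n ∣ Nat.fib (zf n) :=
  Nat.sInf_mem (exists_fib_dvd n hn)

lemma dvd_fib_iff (n : ℕ) (hn : 0 < n) (m : ℕ) : n ∣ Nat.fib m ↔ zf n ∣ m := by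
  obtain ⟨hz, hzd⟩ := zf_mem n hn
  constructor
  · intro hm
    set d := Nat.gcd (zf n) m with hd
    have hnd : n ∣ Nat.fib d := by
      rw [hd, Nat.fib_gcd]; exact Nat.dvd_gcd hzd hm
    have hdpos : 0 < d := Nat.gcd_pos_of_pos_left _ hz
    have h1 : zf n ≤ d := Nat.sInf_le ⟨hdpos, hnd⟩
    have h2 : d ∣ zf n := Nat.gcd_dvd_left _ _
    have : d = zf n := Nat.le_antisymm (Nat.le_of_dvd hz h2) h1
    rw [← this]; exact Nat.gcd_dvd_right _ _
  · intro hm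
    exact dvd_trans hzd (Nat.fib_dvd _ _ hm)

theorem stmt7 (p n : ℕ) (hp : p.Prime) (hn : 0 < n) (hA : n ∈ Afib)
    (h : ellf p ∣ ellf n) : p ∣ n := by
  obtain ⟨m, hm, hgm⟩ := hA
  have hpp : 0 < p := hp.pos
  -- p divides ellf n and fib (ellf n)
  have hp1 : p ∣ ellf n := dvd_trans (Nat.dvd_lcm_left _ _) h
  have hp2 : p ∣ Nat.fib (ellf n) := by
    rw [dvd_fib_iff p hpp]
    exact dvd_trans (Nat.dvd_lcm_right _ _) h
  -- n = gcd m (fib m); ellf n divides m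
  have hnm : n ∣ m := hgm ▸ Nat.gcd_dvd_left _ _
  have hnf : n ∣ Nat.fib m := hgm ▸ Nat.gcd_dvd_right _ _
  have hzm : zf n ∣ m := (dvd_fib_iff n hn m).mp hnf
  have hlm : ellf n ∣ m := Nat.lcm_dvd hnm hzm
  -- gcd (ellf n) (fib (ellf n)) divides n
  have hgm' : Nat.gcd m (Nat.fib m) = n := hgm
  have hgl0 : Nat.gcd (ellf n) (Nat.fib (ellf n)) ∣ Nat.gcd m (Nat.fib m) :=
    Nat.dvd_gcd (dvd_trans (Nat.gcd_dvd_left _ _) hlm)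
      (dvd_trans (Nat.gcd_dvd_right _ _) (Nat.fib_dvd _ _ hlm))
  have hgl : Nat.gcd (ellf n) (Nat.fib (ellf n)) ∣ n := by rw [hgm'] at hgl0; exact hgl0
  exact dvd_trans (Nat.dvd_gcd hp1 hp2) hgl
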